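/- Let $0 < \eta < 1$ and $\delta \in (0, 1-\eta)$. Then there exist a real number $\sigma > 1$ and a positive integer $p$ such that $\sigma < 1/\delta$, $\frac{\delta\sigma}{\sigma-1} < p < \frac{1}{\sigma-1}$, and, setting $\gamma = 1 + p(1-\sigma)$ and $\sigma_1 = \frac{p(\sigma-1)}{\delta}$, one has $\gamma > 0$, $\sigma_1 > \sigma$, and $\eta \sigma_1 < \gamma \sigma$. -/
import Mathlib

set_option maxHeartbeats 1000000


theorem stmt_1 (η δ : ℝ) (hη1 : 0 < η) (hη2 : η < 1) (hδ1 : 0 < δ) (hδ2 : δ < 1 - η) :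
    ∃ (σ : ℝ) (p : ℕ), 1 < σ ∧ 0 < p ∧ σ < 1 / δ ∧
      δ * σ / (σ - 1) < (p : ℝ) ∧ (p : ℝ) < 1 / (σ - 1) ∧
      (0 < 1 + (p : ℝ) * (1 - σ)) ∧
      σ < (p : ℝ) * (σ - 1) / δ ∧
      η * ((p : ℝ) * (σ - 1) / δ) < (1 + (p : ℝ) * (1 - σ)) * σ := by
  set d : ℝ := δ * (1 + 1 / (η + δ)) / 2 with hd
  have hηδ : 0 < η + δ := by linarith
  have hηδ1 : η + δ < 1 := by linarith
  have hu : (η + δ) * (1 / (η + δ)) = 1 := by field_simp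
  have h1u : 1 < 1 / (η + δ) := by
    rw [lt_div_iff₀ hηδ]; linarith
  have hdδ : δ < d := by rw [hd]; nlinarith
  have hd0 : 0 < d := lt_trans hδ1 hdδ
  have hdkey : d * (η + δ) < δ := by rw [hd]; nlinarith
  have hd1 : d < 1 := by nlinarith
  have hδ1' : δ < 1 := by linarith
  have hposA : 0 < δ * d / (d - δ) := div_pos (by positivity) (by linarith)
  have hposB : 0 < δ * d / (1 - δ) := div_pos (by positivity) (by linarith)
  obtain ⟨p, hpgt⟩ := exists_nat_gt (δ * d / (d - δ) + δ * d / (1 - δ))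
  have hA : δ * d / (d - δ) < (p : ℝ) := by linarith
  have hB : δ * d / (1 - δ) < (p : ℝ) := by linarith
  have hP0 : (0 : ℝ) < (p : ℝ) := lt_trans hposA hA
  have hA' : δ * d < (p : ℝ) * (d - δ) := by
    rw [div_lt_iff₀ (by linarith : (0:ℝ) < d - δ)] at hA; linarith [hA]
  have hB' : δ * d < (p : ℝ) * (1 - δ) := by
    rw [div_lt_iff₀ (by linarith : (0:ℝ) < 1 - δ)] at hB; linarith [hB]
  have hdiv : (p : ℝ) * (d / (p : ℝ)) = d := mul_div_cancel₀ d (ne_of_gt hP0)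
  have hkey : δ * (1 + d / (p : ℝ)) < d := by
    have hs : δ * (d / (p : ℝ)) < d - δ := by
      rw [mul_div_assoc', div_lt_iff₀ hP0]; nlinarith
    nlinarith
  refine ⟨1 + d / (p : ℝ), p, ?_, ?_, ?_, ?_, ?_, ?_, ?_, ?_⟩
  · have : 0 < d / (p : ℝ) := div_pos hd0 hP0
    linarith
  · exact_mod_cast Nat.cast_pos.mp hP0
  · -- σ < 1/δ
    have h3 : d / (p : ℝ) < (1 - δ) / δ := by
      rw [div_lt_div_iff₀ hP0 hδ1]; nlinarith
    have h4 : (1 - δ) / δ = 1 / δ - 1 := by field_simp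
    linarith
  · -- δσ/(σ-1) < p
    have hσ1 : (1 + d / (p : ℝ)) - 1 = d / (p : ℝ) := by ring
    have hσ1pos : (0 : ℝ) < (1 + d / (p : ℝ)) - 1 := by
      rw [hσ1]; exact div_pos hd0 hP0
    rw [div_lt_iff₀ hσ1pos, hσ1]
    nlinarith [hkey, hdiv]
  · -- p < 1/(σ-1)
    have hσ1pos : (0 : ℝ) < (1 + d / (p : ℝ)) - 1 := by
      have : 0 < d / (p : ℝ) := div_pos hd0 hP0
      linarith
    rw [lt_div_iff₀ hσ1pos]
    have : (p : ℝ) * ((1 + d / (p : ℝ)) - 1) = d := by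
      rw [show (1 + d / (p : ℝ)) - 1 = d / (p : ℝ) by ring, hdiv]
    linarith
  · -- 0 < 1 + p(1-σ)
    have : (p : ℝ) * (1 - (1 + d / (p : ℝ))) = -d := by
      rw [show 1 - (1 + d / (p : ℝ)) = -(d / (p : ℝ)) by ring, mul_neg, hdiv]
    linarith
  · -- σ < p(σ-1)/δ
    have hnum : (p : ℝ) * ((1 + d / (p : ℝ)) - 1) = d := by
      rw [show (1 + d / (p : ℝ)) - 1 = d / (p : ℝ) by ring, hdiv]
    rw [lt_div_iff₀ hδ1, hnum]
    nlinarith [hkey]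
  · -- η σ₁ < γ σ
    have hnum : (p : ℝ) * ((1 + d / (p : ℝ)) - 1) = d := by
      rw [show (1 + d / (p : ℝ)) - 1 = d / (p : ℝ) by ring, hdiv]
    have hneg : (p : ℝ) * (1 - (1 + d / (p : ℝ))) = -d := by
      rw [show 1 - (1 + d / (p : ℝ)) = -(d / (p : ℝ)) by ring, mul_neg, hdiv]
    rw [hnum, hneg]
    have h8 : η * d / δ < 1 - d := by
      rw [div_lt_iff₀ hδ1]; nlinarith
    have hσpos : 1 < 1 + d / (p : ℝ) := by
      have : 0 < d / (p : ℝ) := div_pos hd0 hP0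
      linarith
    have h1d : 0 < 1 - d := by linarith
    calc η * (d / δ) = η * d / δ := by ring
      _ < 1 - d := h8
      _ = (1 + -d) * 1 := by ring
      _ < (1 + -d) * (1 + d / (p : ℝ)) := by
          apply mul_lt_mul_of_pos_left hσpos (by linarith)
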